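/- arXiv:2202.11393 — 5 statements merged into one kernel-verified Lean document; each statement's English description precedes it below -/
import Mathlib

section
/- Let X be a standard Laplace random variable (density f(x) = e^{−|x|}/2), and let q be a real-valued query with global sensitivity Δ > 0. The mechanism returning q(d) + sX is (ε, δ)-differentially private (for ε ≥ 0, 0 ≤ δ < 1) if and only if s ≥ Δ / (ε − 2 log(1 − δ)). -/
/-!
For a shift `c ≥ 0` the privacy loss of the Laplace density `f` is
`log (f (x - c) / f x) = |x| - |x - c|`, a nondecreasing function of `x`. Hence, over all events
`A`, the excess `∫_A f (· - c) - e^ε ∫_A f` is largest on the event `{x > (ε + c) / 2}` where the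
loss exceeds `ε`, and there it equals `1 - exp ((ε - c) / 2)` (a Neyman–Pearson argument).
The mechanism is `(ε, δ)`-private iff this is at most `δ` for `c = Δ / s`, which rearranges to
`Δ / s ≤ ε - 2 log (1 - δ)`. Negative shifts reduce to positive ones since `f` is even.
-/

open MeasureTheory

open Real Set

theorem setIntegral_le_of_nonneg_on_of_nonpos_off {α : Type*} [MeasurableSpace α]
    {μ : Measure α} {f : α → ℝ} {E : Set α}
    (hf : Integrable f μ) (hE : MeasurableSet E) (hpos : ∀ x ∈ E, 0 ≤ f x)
    (hneg : ∀ x ∉ E, f x ≤ 0) (A : Set α) : ∫ x in A, f x ∂μ ≤ ∫ x in E, f x ∂μ := by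
  rw [← integral_inter_add_sdiff hE hf.integrableOn]
  have hout : ∫ x in A \ E, f x ∂μ ≤ 0 :=
    setIntegral_nonpos_of_ae_restrict <| ae_restrict_of_ae_restrict_of_subset
      (fun _ hx => hx.2) ((ae_restrict_iff' hE.compl).mpr (ae_of_all _ hneg))
  have hin : ∫ x in A ∩ E, f x ∂μ ≤ ∫ x in E, f x ∂μ :=
    setIntegral_mono_set hf.integrableOn ((ae_restrict_iff' hE).mpr (ae_of_all _ hpos))
      inter_subset_right.eventuallyLE
  linarith

theorem setIntegral_preimage_add_const {E : Type*} [NormedAddCommGroup E] [NormedSpace ℝ E]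
    (g : ℝ → E) (c : ℝ) (A : Set ℝ) :
    ∫ x in (· + c) ⁻¹' A, g x = ∫ x in A, g (x - c) := by
  simpa using (measurePreserving_add_right volume c).setIntegral_preimage_emb
    (measurableEmbedding_addRight c) (fun x => g (x - c)) A

theorem setIntegral_preimage_neg {E : Type*} [NormedAddCommGroup E] [NormedSpace ℝ E]
    (g : ℝ → E) (A : Set ℝ) :
    ∫ x in Neg.neg ⁻¹' A, g (-x) = ∫ x in A, g x :=
  (Measure.measurePreserving_neg volume).setIntegral_preimage_emb
    (MeasurableEquiv.neg ℝ).measurableEmbedding g A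

noncomputable def laplacePDF (x : ℝ) : ℝ := exp (-|x|) / 2

theorem laplacePDF_pos (x : ℝ) : 0 < laplacePDF x := by unfold laplacePDF; positivity

theorem continuous_laplacePDF : Continuous laplacePDF := by unfold laplacePDF; fun_prop

theorem laplacePDF_neg (x : ℝ) : laplacePDF (-x) = laplacePDF x := by simp [laplacePDF]

theorem laplacePDF_sub (x c : ℝ) : laplacePDF (x - c) = exp (|x| - |x - c|) * laplacePDF x := by
  rw [laplacePDF, laplacePDF, ← mul_div_assoc, ← exp_add]
  ring_nf

theorem integrable_laplacePDF : Integrable laplacePDF := by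
  have hneg : IntegrableOn laplacePDF (Iic 0) :=
    IntegrableOn.congr_fun ((integrableOn_exp_Iic 0).div_const 2)
      (fun x hx => by simp [laplacePDF, abs_of_nonpos (mem_Iic.mp hx)]) measurableSet_Iic
  have hpos : IntegrableOn laplacePDF (Ioi 0) :=
    IntegrableOn.congr_fun ((exp_neg_integrableOn_Ioi 0 one_pos).div_const 2)
      (fun x hx => by simp [laplacePDF, abs_of_pos (mem_Ioi.mp hx)]) measurableSet_Ioi
  simpa using hneg.union hpos

theorem integral_Ioi_laplacePDF_of_nonneg {b : ℝ} (hb : 0 ≤ b) :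
    ∫ x in Ioi b, laplacePDF x = exp (-b) / 2 := by
  rw [setIntegral_congr_fun measurableSet_Ioi (g := fun x => exp (-x) / 2)
    (fun x hx => by simp [laplacePDF, abs_of_pos (hb.trans_lt hx)]),
    integral_div, integral_exp_neg_Ioi]

theorem integral_Ioi_laplacePDF_of_nonpos {b : ℝ} (hb : b ≤ 0) :
    ∫ x in Ioi b, laplacePDF x = 1 - exp b / 2 := by
  have hmid : ∫ x in Ioc b 0, laplacePDF x = (1 - exp b) / 2 := by
    rw [setIntegral_congr_fun measurableSet_Ioc (g := fun x => exp x / 2)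
      (fun x hx => by simp [laplacePDF, abs_of_nonpos hx.2]), integral_div,
      ← intervalIntegral.integral_of_le hb, integral_exp, exp_zero]
  rw [← Ioc_union_Ioi_eq_Ioi hb, setIntegral_union (Ioc_disjoint_Ioi le_rfl) measurableSet_Ioi
    integrable_laplacePDF.integrableOn integrable_laplacePDF.integrableOn, hmid,
    integral_Ioi_laplacePDF_of_nonneg le_rfl, neg_zero, exp_zero]
  ring

theorem toReal_withDensity_laplacePDF (A : Set ℝ) :
    ((volume.withDensity fun x => ENNReal.ofReal (exp (-|x|) / 2)) A).toReal =
      ∫ x in A, laplacePDF x := by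
  rw [withDensity_apply', integral_eq_lintegral_of_nonneg_ae
    (ae_of_all _ fun x => (laplacePDF_pos x).le) continuous_laplacePDF.aestronglyMeasurable]
  rfl

theorem integral_laplacePDF_shift_sub_Ioi {ε c : ℝ} (h₁ : -c ≤ ε) (h₂ : ε ≤ c) :
    (∫ x in Ioi ((ε + c) / 2), laplacePDF (x - c)) -
        exp ε * ∫ x in Ioi ((ε + c) / 2), laplacePDF x = 1 - exp ((ε - c) / 2) := by
  rw [← setIntegral_preimage_add_const laplacePDF c, preimage_add_const_Ioi,
    integral_Ioi_laplacePDF_of_nonpos (by linarith),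
    integral_Ioi_laplacePDF_of_nonneg (by linarith), ← mul_div_assoc, ← exp_add,
    show (ε + c) / 2 - c = (ε - c) / 2 by ring, show ε + -((ε + c) / 2) = (ε - c) / 2 by ring]
  ring

theorem integral_laplacePDF_shift_sub_le {ε c : ℝ} (h₁ : -c ≤ ε) (h₂ : ε ≤ c) (A : Set ℝ) :
    (∫ x in A, laplacePDF (x - c)) - exp ε * ∫ x in A, laplacePDF x ≤ 1 - exp ((ε - c) / 2) := by
  set g := fun x => laplacePDF (x - c) - exp ε * laplacePDF x
  have hshift : Integrable fun x => laplacePDF (x - c) := integrable_laplacePDF.comp_sub_right c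
  have hscaled : Integrable fun x => exp ε * laplacePDF x := integrable_laplacePDF.const_mul _
  have hg_eq (x : ℝ) : g x = (exp (|x| - |x - c|) - exp ε) * laplacePDF x := by
    simp only [g, laplacePDF_sub]; ring
  have hpos : ∀ x ∈ Ioi ((ε + c) / 2), 0 ≤ g x := fun x hx => by
    have hloss : ε ≤ |x| - |x - c| := by
      have := mem_Ioi.mp hx
      rcases abs_cases x with ⟨_, _⟩ | ⟨_, _⟩ <;>
        rcases abs_cases (x - c) with ⟨_, _⟩ | ⟨_, _⟩ <;> linarith
    rw [hg_eq]
    exact mul_nonneg (sub_nonneg.mpr (exp_le_exp.mpr hloss)) (laplacePDF_pos x).le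
  have hneg : ∀ x ∉ Ioi ((ε + c) / 2), g x ≤ 0 := fun x hx => by
    have hloss : |x| - |x - c| ≤ ε := by
      have : x ≤ (ε + c) / 2 := not_lt.mp hx
      rcases abs_cases x with ⟨_, _⟩ | ⟨_, _⟩ <;>
        rcases abs_cases (x - c) with ⟨_, _⟩ | ⟨_, _⟩ <;> linarith
    rw [hg_eq]
    exact mul_nonpos_of_nonpos_of_nonneg (sub_nonpos.mpr (exp_le_exp.mpr hloss))
      (laplacePDF_pos x).le
  have key : ∫ x in A, g x ≤ ∫ x in Ioi ((ε + c) / 2), g x :=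
    setIntegral_le_of_nonneg_on_of_nonpos_off (hshift.sub hscaled) measurableSet_Ioi hpos hneg A
  rwa [integral_sub hshift.integrableOn hscaled.integrableOn,
    integral_sub hshift.integrableOn hscaled.integrableOn, integral_const_mul, integral_const_mul,
    integral_laplacePDF_shift_sub_Ioi h₁ h₂] at key

theorem one_sub_exp_le_iff {ε c δ : ℝ} (hδ : δ < 1) :
    1 - exp ((ε - c) / 2) ≤ δ ↔ c ≤ ε - 2 * log (1 - δ) := by
  rw [sub_le_comm, ← log_le_iff_le_exp (by linarith)]
  constructor <;> intro h <;> linarith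

theorem integral_laplacePDF_shift_le_of_nonneg {ε δ c : ℝ} (hε : 0 ≤ ε) (hδ0 : 0 ≤ δ)
    (hδ1 : δ < 1) (hc0 : 0 ≤ c) (hc : c ≤ ε - 2 * log (1 - δ)) (A : Set ℝ) :
    ∫ x in A, laplacePDF (x - c) ≤ exp ε * (∫ x in A, laplacePDF x) + δ := by
  -- the privacy loss `|x| - |x - c|` never exceeds `c`, so only `min ε c` matters
  have hexcess := integral_laplacePDF_shift_sub_le (ε := min ε c) (by
    rcases min_choice ε c with h | h <;> rw [h] <;> linarith) (min_le_right ε c) A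
  have hδ : 1 - exp ((min ε c - c) / 2) ≤ δ := by
    rw [one_sub_exp_le_iff hδ1]
    rcases min_choice ε c with h | h <;> rw [h]
    · exact hc
    · linarith [log_nonpos (by linarith : 0 ≤ 1 - δ) (by linarith)]
  have hexp : exp (min ε c) * ∫ x in A, laplacePDF x ≤ exp ε * ∫ x in A, laplacePDF x :=
    mul_le_mul_of_nonneg_right (exp_le_exp.mpr (min_le_left ε c))
      (integral_nonneg fun x => (laplacePDF_pos x).le)
  linarith

theorem integral_laplacePDF_shift_le {ε δ c : ℝ} (hε : 0 ≤ ε) (hδ0 : 0 ≤ δ) (hδ1 : δ < 1)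
    (hc : |c| ≤ ε - 2 * log (1 - δ)) (A : Set ℝ) :
    ∫ x in A, laplacePDF (x - c) ≤ exp ε * (∫ x in A, laplacePDF x) + δ := by
  rcases le_total 0 c with hc0 | hc0
  · exact integral_laplacePDF_shift_le_of_nonneg hε hδ0 hδ1 hc0
      (by rwa [abs_of_nonneg hc0] at hc) A
  · have h := integral_laplacePDF_shift_le_of_nonneg hε hδ0 hδ1 (neg_nonneg.mpr hc0)
      (by rwa [abs_of_nonpos hc0] at hc) (Neg.neg ⁻¹' A)
    rw [← setIntegral_preimage_neg (fun x => laplacePDF (x - c)),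
      ← setIntegral_preimage_neg laplacePDF]
    simpa only [show ∀ x, -x - c = -(x - -c) by intro x; ring, laplacePDF_neg] using h

theorem laplace_mechanism_general (Δ ε δ s : ℝ) (hε : 0 ≤ ε)
    (hδ0 : 0 ≤ δ) (hδ1 : δ < 1) (hs : 0 < s) :
    (∀ t : ℝ, |t| ≤ Δ → ∀ S : Set ℝ, MeasurableSet S →
        ((volume.withDensity fun x => ENNReal.ofReal (Real.exp (-|x|) / 2))
            {x | t + s * x ∈ S}).toReal ≤
          Real.exp ε *
            ((volume.withDensity fun x => ENNReal.ofReal (Real.exp (-|x|) / 2))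
              {x | s * x ∈ S}).toReal + δ) ↔
      Δ / s ≤ ε - 2 * Real.log (1 - δ) := by
  have hpre (t : ℝ) (S : Set ℝ) : {x | t + s * x ∈ S} = (· + t / s) ⁻¹' {x | s * x ∈ S} := by
    ext x; simp [mul_add, mul_div_cancel₀ t hs.ne', add_comm]
  simp only [hpre, toReal_withDensity_laplacePDF, setIntegral_preimage_add_const]
  constructor
  · intro hdp
    rcases le_or_gt (Δ / s) ε with hle | hlt
    · linarith [log_nonpos (by linarith : 0 ≤ 1 - δ) (by linarith)]
    set c := Δ / s
    have hΔ : 0 < Δ := by simpa [c, hs] using hε.trans_lt hlt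
    have h := hdp Δ (abs_of_pos hΔ).le (Ioi (s * ((ε + c) / 2))) measurableSet_Ioi
    have hset : {x | s * x ∈ Ioi (s * ((ε + c) / 2))} = Ioi ((ε + c) / 2) := by
      ext; simp [hs]
    rw [hset] at h
    rw [← one_sub_exp_le_iff hδ1, ← integral_laplacePDF_shift_sub_Ioi (by linarith) hlt.le]
    linarith
  · intro hK t ht S _
    refine integral_laplacePDF_shift_le hε hδ0 hδ1 ?_ _
    rw [abs_div, abs_of_pos hs]
    exact (div_le_div_of_nonneg_right ht hs.le).trans hK

/-- The Laplace mechanism with scale `s` is `(ε, δ)`-differentially private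
for a query of global sensitivity `Δ` iff `s ≥ Δ / (ε − 2 log(1 − δ))`
(stated equivalently, for `s > 0`, as `Δ / s ≤ ε − 2 log(1 − δ)`). -/
theorem laplace_mechanism (Δ ε δ s : ℝ) (hΔ : 0 < Δ) (hε : 0 ≤ ε)
    (hδ0 : 0 ≤ δ) (hδ1 : δ < 1) (hs : 0 < s) :
    (∀ t : ℝ, |t| ≤ Δ → ∀ S : Set ℝ, MeasurableSet S →
        ((volume.withDensity fun x => ENNReal.ofReal (Real.exp (-|x|) / 2))
            {x | t + s * x ∈ S}).toReal ≤
          Real.exp ε *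
            ((volume.withDensity fun x => ENNReal.ofReal (Real.exp (-|x|) / 2))
              {x | s * x ∈ S}).toReal + δ) ↔
      Δ / s ≤ ε - 2 * Real.log (1 - δ) :=
  laplace_mechanism_general Δ ε δ s hε hδ0 hδ1 hs
end

section
/- Let X be a standard Logistic random variable (density f(x) = e^{−x}/(1 + e^{−x})²), and let q be a real-valued query with global sensitivity Δ > 0. The mechanism returning q(d) + sX is (ε, δ)-differentially private (for ε ≥ 0, 0 ≤ δ < 1) if and only if s ≥ Δ / (2 log((e^{ε/2} + √(δ(e^ε + δ − 1))) / (1 − δ))). -/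
/-!
For `c > ε` the likelihood ratio `f(y - c) / f(y)` of the logistic density is increasing in `y`,
so among all sets `T` the excess `P(X + c ∈ T) - e^ε P(X ∈ T)` is maximised by a half-line
`(x_c, ∞)`; evaluating the sigmoid there gives `(e^{c/2} - e^{ε/2})² / (e^c - 1)`. For `c ≤ ε`
the ratio never exceeds `e^ε`. Requiring the excess to be at most `δ` is a quadratic inequality
in `e^{c/2}`, whose larger root is `(e^{ε/2} + √(δ(e^ε + δ - 1))) / (1 - δ)`. Symmetry of the
density handles `c < 0`, and rescaling by `s` turns a shift `t` of `sX` into a shift `t / s` of `X`.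
-/

open MeasureTheory Real Set Filter Topology

lemma exp_half_sq (x : ℝ) : exp (x / 2) ^ 2 = exp x := by
  rw [← exp_nat_mul]; ring_nf

lemma setIntegral_le_setIntegral_of_nonneg_of_nonpos_compl {α : Type*} [MeasurableSpace α]
    {μ : Measure α} {g : α → ℝ} {s t : Set α} (hs : MeasurableSet s) (ht : MeasurableSet t)
    (hg : Integrable g μ) (h_nonneg : ∀ x ∈ s, 0 ≤ g x) (h_nonpos : ∀ x ∉ s, g x ≤ 0) :
    ∫ x in t, g x ∂μ ≤ ∫ x in s, g x ∂μ := by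
  rw [← integral_indicator hs, ← integral_indicator ht]
  refine integral_mono (hg.indicator ht) (hg.indicator hs) fun x => ?_
  by_cases hxs : x ∈ s <;> by_cases hxt : x ∈ t <;> simp [hxs, hxt, h_nonneg, h_nonpos]

lemma Function.Even.setIntegral_sub {f : ℝ → ℝ} (hf : f.Even) (T : Set ℝ) (c : ℝ) :
    ∫ y in T, f (y - c) = ∫ y in -T, f (y + c) := by
  have := (Measure.measurePreserving_neg volume).setIntegral_preimage_emb measurableEmbedding_neg
    (fun y => f (y + c)) (-T)
  rw [Set.neg_preimage, neg_neg] at this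
  rw [← this]
  congr! 2 with x
  rw [← hf, neg_sub, neg_add_eq_sub]

lemma sq_sub_le_mul_sq_sub_one_iff {a b δ : ℝ} (hb : 1 ≤ b) (hba : b ≤ a) (hδ0 : 0 ≤ δ)
    (hδ1 : δ < 1) :
    (a - b) ^ 2 ≤ δ * (a ^ 2 - 1) ↔ a ≤ (b + √(δ * (b ^ 2 + δ - 1))) / (1 - δ) := by
  set D := δ * (b ^ 2 + δ - 1)
  have hD : 0 ≤ D := mul_nonneg hδ0 (by nlinarith)
  have hδb : δ * b ≤ √D := by
    refine Real.le_sqrt_of_sq_le ?_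
    have : 0 ≤ δ * (1 - δ) * (b ^ 2 - 1) := by
      have : 1 ≤ b ^ 2 := by nlinarith
      exact mul_nonneg (mul_nonneg hδ0 (by linarith)) (by linarith)
    linear_combination this
  -- the smaller root of the quadratic lies below `b`, so only the larger one matters
  have hlow : -√D ≤ (1 - δ) * a - b := by nlinarith
  have key : ((1 - δ) * a - b) ^ 2 - D = (1 - δ) * ((a - b) ^ 2 - δ * (a ^ 2 - 1)) := by ring
  calc (a - b) ^ 2 ≤ δ * (a ^ 2 - 1) ↔ ((1 - δ) * a - b) ^ 2 ≤ D := by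
        constructor <;> intro h <;> nlinarith
    _ ↔ (1 - δ) * a - b ≤ √D := by rw [Real.sq_le hD, and_iff_right hlow]
    _ ↔ a ≤ (b + √D) / (1 - δ) := by
        rw [le_div_iff₀ (by linarith)]
        constructor <;> intro h <;> linarith

def IsShiftPrivate (μ : Measure ℝ) (ε δ c : ℝ) : Prop :=
  ∀ T : Set ℝ, MeasurableSet T → (μ {x | x + c ∈ T}).toReal ≤ exp ε * (μ T).toReal + δ

lemma forall_abs_le_iff_forall_isShiftPrivate {μ : Measure ℝ} {Δ ε δ s : ℝ} (hs : 0 < s) :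
    (∀ t : ℝ, |t| ≤ Δ → ∀ S : Set ℝ, MeasurableSet S →
        (μ {x | t + s * x ∈ S}).toReal ≤ exp ε * (μ {x | s * x ∈ S}).toReal + δ) ↔
      ∀ c : ℝ, |c| ≤ Δ / s → IsShiftPrivate μ ε δ c := by
  have habs (c : ℝ) : |s * c| ≤ Δ ↔ |c| ≤ Δ / s := by
    rw [abs_mul, abs_of_pos hs, le_div_iff₀' hs]
  constructor
  · intro h c hc T hT
    have := h (s * c) ((habs c).2 hc) ((· / s) ⁻¹' T) (measurable_id.div_const s hT)
    have hx (x : ℝ) : (s * c + s * x) / s = x + c := by field_simp; ring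
    simpa [hx, hs.ne'] using this
  · intro h t ht S hS
    have := h (t / s) ((habs _).1 (by rwa [mul_div_cancel₀ _ hs.ne'])) ((s * ·) ⁻¹' S)
      (measurable_const_mul s hS)
    have hx (x : ℝ) : s * (x + t / s) = t + s * x := by field_simp; ring
    simp only [mem_preimage, hx] at this
    exact this

noncomputable def logisticPDF (x : ℝ) : ℝ := exp (-x) / (1 + exp (-x)) ^ 2

lemma logisticPDF_pos (x : ℝ) : 0 < logisticPDF x := by
  unfold logisticPDF; positivity

lemma logisticPDF_sub (c y : ℝ) :
    logisticPDF (y - c) =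
      (exp (c / 2) * (1 + exp y) / (exp c + exp y)) ^ 2 * logisticPDF y := by
  simp only [logisticPDF, neg_sub, exp_sub, exp_neg, div_pow, mul_pow, exp_half_sq]
  field_simp
  ring

lemma even_logisticPDF : Function.Even logisticPDF := fun x => by
  simp only [logisticPDF, neg_neg, exp_neg]
  field_simp
  ring

lemma hasDerivAt_sigmoid_logisticPDF (x : ℝ) : HasDerivAt sigmoid (logisticPDF x) x := by
  convert hasDerivAt_sigmoid x using 1
  rw [logisticPDF, ← sigmoid_neg, ← sigmoid_mul_rexp_neg x, sigmoid_def]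
  field_simp

lemma integrableOn_Ioi_logisticPDF (a : ℝ) : IntegrableOn logisticPDF (Ioi a) :=
  integrableOn_Ioi_deriv_of_nonneg' (fun x _ => hasDerivAt_sigmoid_logisticPDF x)
    (fun x _ => (logisticPDF_pos x).le) tendsto_sigmoid_atTop

lemma integrable_logisticPDF : Integrable logisticPDF := by
  have hIio : IntegrableOn logisticPDF (Iio 0) := by
    have := (Measure.measurePreserving_neg (volume : Measure ℝ)).integrableOn_comp_preimage
      measurableEmbedding_neg (f := logisticPDF) (s := Ioi 0)
    rw [show logisticPDF ∘ Neg.neg = logisticPDF from funext even_logisticPDF] at this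
    simpa using this.2 (integrableOn_Ioi_logisticPDF 0)
  rw [← integrableOn_univ, ← Iio_union_Ici (a := 0)]
  exact hIio.union <|
    (integrableOn_Ici_iff_integrableOn_Ioi).2 (integrableOn_Ioi_logisticPDF 0)

lemma setIntegral_Ioi_logisticPDF_sub (c r : ℝ) :
    ∫ y in Ioi r, logisticPDF (y - c) = sigmoid (c - r) := by
  have hderiv (x : ℝ) : HasDerivAt (fun y => sigmoid (y - c)) (logisticPDF (x - c)) x := by
    simpa using (hasDerivAt_sigmoid_logisticPDF (x - c)).comp_sub_const x c
  have hlim : Tendsto (fun y => sigmoid (y - c)) atTop (𝓝 1) :=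
    tendsto_sigmoid_atTop.comp (tendsto_atTop_add_const_right _ _ tendsto_id)
  rw [integral_Ioi_of_hasDerivAt_of_tendsto' (fun x _ => hderiv x)
    (integrable_logisticPDF.comp_sub_right c).integrableOn hlim, ← sigmoid_neg, neg_sub]

lemma setIntegral_Ioi_logisticPDF (r : ℝ) : ∫ y in Ioi r, logisticPDF y = sigmoid (-r) := by
  simpa using setIntegral_Ioi_logisticPDF_sub 0 r

lemma logisticPDF_sub_le_iff {c ε y : ℝ} :
    logisticPDF (y - c) ≤ exp ε * logisticPDF y ↔
      exp (c / 2) * (1 + exp y) ≤ exp (ε / 2) * (exp c + exp y) := by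
  rw [logisticPDF_sub, ← exp_half_sq ε, mul_le_mul_iff_left₀ (logisticPDF_pos y),
    pow_le_pow_iff_left₀ (by positivity) (by positivity) two_ne_zero,
    div_le_iff₀ (by positivity)]

/-- The unique `y` with `logisticPDF (y - c) = exp ε * logisticPDF y` when `0 ≤ ε < c`: there
`e^y = a (a b - 1) / (a - b)` with `a = e^{c/2}`, `b = e^{ε/2}`. -/
noncomputable def privacyLossThreshold (c ε : ℝ) : ℝ :=
  log (exp (c / 2) * (exp (c / 2) * exp (ε / 2) - 1) / (exp (c / 2) - exp (ε / 2)))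

section Threshold

variable {c ε : ℝ} (hε : 0 ≤ ε) (hc : ε < c)
include hε hc

lemma logisticPDF_sub_le_iff_le_privacyLossThreshold (y : ℝ) :
    logisticPDF (y - c) ≤ exp ε * logisticPDF y ↔ y ≤ privacyLossThreshold c ε := by
  have hb : 1 ≤ exp (ε / 2) := one_le_exp (by linarith)
  have hba : exp (ε / 2) < exp (c / 2) := exp_lt_exp.2 (by linarith)
  have hab : 1 < exp (c / 2) * exp (ε / 2) := by nlinarith
  rw [logisticPDF_sub_le_iff, privacyLossThreshold, le_log_iff_exp_le (by positivity),
    le_div_iff₀ (by linarith), ← exp_half_sq c]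
  constructor <;> intro h <;> nlinarith

lemma sigmoid_sub_privacyLossThreshold :
    sigmoid (c - privacyLossThreshold c ε) - exp ε * sigmoid (-privacyLossThreshold c ε) =
      (exp (c / 2) - exp (ε / 2)) ^ 2 / (exp c - 1) := by
  have hb : 1 ≤ exp (ε / 2) := one_le_exp (by linarith)
  have hba : exp (ε / 2) < exp (c / 2) := exp_lt_exp.2 (by linarith)
  have hab : 1 < exp (c / 2) * exp (ε / 2) := by nlinarith
  rw [sigmoid_def, sigmoid_def, neg_sub, neg_neg, exp_sub, privacyLossThreshold,
    exp_log (by positivity), ← exp_half_sq c, ← exp_half_sq ε]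
  set a := exp (c / 2)
  set b := exp (ε / 2)
  have ha : a ≠ 0 := by positivity
  have hab' : a - b ≠ 0 := by linarith
  have ha2 : a ^ 2 - 1 ≠ 0 := by nlinarith
  have h1 : 1 + a * (a * b - 1) / (a - b) / a ^ 2 = (a ^ 2 - 1) / (a * (a - b)) := by
    field_simp; ring
  have h2 : 1 + a * (a * b - 1) / (a - b) = b * (a ^ 2 - 1) / (a - b) := by
    field_simp; ring
  rw [h1, h2, inv_div, inv_div]
  field_simp

lemma setIntegral_Ioi_privacyLossThreshold :
    (∫ y in Ioi (privacyLossThreshold c ε), logisticPDF (y - c)) -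
        exp ε * ∫ y in Ioi (privacyLossThreshold c ε), logisticPDF y =
      (exp (c / 2) - exp (ε / 2)) ^ 2 / (exp c - 1) := by
  rw [setIntegral_Ioi_logisticPDF_sub, setIntegral_Ioi_logisticPDF,
    sigmoid_sub_privacyLossThreshold hε hc]

lemma setIntegral_logisticPDF_sub_sub_le {T : Set ℝ} (hT : MeasurableSet T) :
    (∫ y in T, logisticPDF (y - c)) - exp ε * ∫ y in T, logisticPDF y ≤
      (exp (c / 2) - exp (ε / 2)) ^ 2 / (exp c - 1) := by
  have hshift := integrable_logisticPDF.comp_sub_right c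
  have hscale := integrable_logisticPDF.const_mul (exp ε)
  have hsub (U : Set ℝ) : (∫ y in U, logisticPDF (y - c)) - exp ε * ∫ y in U, logisticPDF y =
      ∫ y in U, (logisticPDF (y - c) - exp ε * logisticPDF y) := by
    rw [integral_sub hshift.integrableOn hscale.integrableOn, integral_const_mul]
  rw [← setIntegral_Ioi_privacyLossThreshold hε hc, hsub, hsub]
  refine setIntegral_le_setIntegral_of_nonneg_of_nonpos_compl measurableSet_Ioi hT
    (hshift.sub hscale) (fun y hy => ?_) (fun y hy => ?_)
  · have := (logisticPDF_sub_le_iff_le_privacyLossThreshold hε hc y).not.2 (not_le.2 hy)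
    linarith
  · have := (logisticPDF_sub_le_iff_le_privacyLossThreshold hε hc y).2 (not_lt.1 hy)
    linarith

end Threshold

noncomputable def logisticMeasure : Measure ℝ :=
  volume.withDensity fun x => ENNReal.ofReal (logisticPDF x)

lemma logisticMeasure_toReal {S : Set ℝ} (hS : MeasurableSet S) :
    (logisticMeasure S).toReal = ∫ x in S, logisticPDF x := by
  rw [logisticMeasure, withDensity_apply _ hS, ← ofReal_integral_eq_lintegral_ofReal
    integrable_logisticPDF.integrableOn (ae_of_all _ fun x => (logisticPDF_pos x).le)]
  exact ENNReal.toReal_ofReal (setIntegral_nonneg hS fun x _ => (logisticPDF_pos x).le)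

lemma logisticMeasure_preimage_add_toReal {T : Set ℝ} (hT : MeasurableSet T) (c : ℝ) :
    (logisticMeasure {x | x + c ∈ T}).toReal = ∫ y in T, logisticPDF (y - c) := by
  have hT' : MeasurableSet {x | x + c ∈ T} := measurable_add_const c hT
  rw [logisticMeasure_toReal hT']
  have := (measurePreserving_add_right volume c).setIntegral_preimage_emb
    (measurableEmbedding_addRight c) (fun y => logisticPDF (y - c)) T
  simp only [add_sub_cancel_right] at this
  exact this

section ShiftPrivate

variable {ε δ c : ℝ}

lemma isShiftPrivate_logisticMeasure_iff : IsShiftPrivate logisticMeasure ε δ c ↔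
    ∀ T, MeasurableSet T →
      (∫ y in T, logisticPDF (y - c)) - exp ε * ∫ y in T, logisticPDF y ≤ δ := by
  refine forall₂_congr fun T hT => ?_
  rw [logisticMeasure_preimage_add_toReal hT, logisticMeasure_toReal hT, sub_le_iff_le_add']

lemma isShiftPrivate_logisticMeasure_neg_iff :
    IsShiftPrivate logisticMeasure ε δ (-c) ↔ IsShiftPrivate logisticMeasure ε δ c := by
  suffices ∀ c, IsShiftPrivate logisticMeasure ε δ (-c) →
      IsShiftPrivate logisticMeasure ε δ c from
    ⟨this c, fun h => this (-c) (by rwa [neg_neg])⟩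
  intro c h
  rw [isShiftPrivate_logisticMeasure_iff] at h ⊢
  intro T hT
  have h0 := even_logisticPDF.setIntegral_sub T 0
  simp only [sub_zero, add_zero] at h0
  simp only [sub_neg_eq_add] at h
  rw [even_logisticPDF.setIntegral_sub T c, h0]
  exact h (-T) hT.neg

lemma isShiftPrivate_logisticMeasure_of_le (hc : 0 ≤ c) (hcε : c ≤ ε) (hδ : 0 ≤ δ) :
    IsShiftPrivate logisticMeasure ε δ c := by
  rw [isShiftPrivate_logisticMeasure_iff]
  intro T hT
  have hpt (y : ℝ) : logisticPDF (y - c) ≤ exp ε * logisticPDF y := by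
    rw [logisticPDF_sub_le_iff]
    have h1 : exp (c / 2) ≤ exp (ε / 2) := exp_le_exp.2 (by linarith)
    have h2 : 1 ≤ exp c := one_le_exp hc
    nlinarith [exp_pos y, exp_pos (c / 2)]
  have := setIntegral_mono (s := T) (integrable_logisticPDF.comp_sub_right c).integrableOn
    (integrable_logisticPDF.const_mul (exp ε)).integrableOn hpt
  rw [integral_const_mul] at this
  linarith

lemma isShiftPrivate_logisticMeasure_iff_of_lt (hε : 0 ≤ ε) (hc : ε < c) :
    IsShiftPrivate logisticMeasure ε δ c ↔
      (exp (c / 2) - exp (ε / 2)) ^ 2 / (exp c - 1) ≤ δ := by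
  rw [isShiftPrivate_logisticMeasure_iff]
  refine ⟨fun h => ?_, fun h T hT => (setIntegral_logisticPDF_sub_sub_le hε hc hT).trans h⟩
  rw [← setIntegral_Ioi_privacyLossThreshold hε hc]
  exact h _ measurableSet_Ioi

lemma isShiftPrivate_logisticMeasure_iff_le (hε : 0 ≤ ε) (hδ0 : 0 ≤ δ) (hδ1 : δ < 1)
    (hc : 0 ≤ c) : IsShiftPrivate logisticMeasure ε δ c ↔
      c ≤ 2 * log ((exp (ε / 2) + √(δ * (exp ε + δ - 1))) / (1 - δ)) := by
  have hb : 1 ≤ exp (ε / 2) := one_le_exp (by linarith)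
  rw [← exp_half_sq ε, ← div_le_iff₀' two_pos,
    le_log_iff_exp_le (div_pos (by positivity) (by linarith))]
  rcases le_or_gt c ε with hcε | hεc
  · refine iff_of_true (isShiftPrivate_logisticMeasure_of_le hc hcε hδ0) ?_
    have hbA := (sq_sub_le_mul_sq_sub_one_iff hb le_rfl hδ0 hδ1).1 <| by
      rw [sub_self, zero_pow two_ne_zero]
      exact mul_nonneg hδ0 (by nlinarith)
    exact (exp_le_exp.2 (by linarith)).trans hbA
  · have hba : exp (ε / 2) ≤ exp (c / 2) := exp_le_exp.2 (by linarith)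
    rw [isShiftPrivate_logisticMeasure_iff_of_lt hε hεc,
      div_le_iff₀ (sub_pos.2 (one_lt_exp_iff.2 (by linarith))), ← exp_half_sq c,
      sq_sub_le_mul_sq_sub_one_iff hb hba hδ0 hδ1]

lemma isShiftPrivate_logisticMeasure_iff_abs_le (hε : 0 ≤ ε) (hδ0 : 0 ≤ δ) (hδ1 : δ < 1) :
    IsShiftPrivate logisticMeasure ε δ c ↔
      |c| ≤ 2 * log ((exp (ε / 2) + √(δ * (exp ε + δ - 1))) / (1 - δ)) := by
  rcases le_total 0 c with hc | hc
  · rw [abs_of_nonneg hc, isShiftPrivate_logisticMeasure_iff_le hε hδ0 hδ1 hc]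
  · rw [abs_of_nonpos hc, ← isShiftPrivate_logisticMeasure_neg_iff,
      isShiftPrivate_logisticMeasure_iff_le hε hδ0 hδ1 (neg_nonneg.2 hc)]

end ShiftPrivate

/-- The Logistic mechanism with scale `s` is `(ε, δ)`-differentially private
for a query of global sensitivity `Δ` iff
`s ≥ Δ / (2 log((e^{ε/2} + √(δ(e^ε + δ − 1))) / (1 − δ)))`
(stated equivalently, for `s > 0`, as `Δ / s ≤ 2 log(...)`). -/
theorem logistic_mechanism (Δ ε δ s : ℝ) (hΔ : 0 < Δ) (hε : 0 ≤ ε)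
    (hδ0 : 0 ≤ δ) (hδ1 : δ < 1) (hs : 0 < s) :
    (∀ t : ℝ, |t| ≤ Δ → ∀ S : Set ℝ, MeasurableSet S →
        ((volume.withDensity fun x =>
              ENNReal.ofReal (Real.exp (-x) / (1 + Real.exp (-x)) ^ 2))
            {x | t + s * x ∈ S}).toReal ≤
          Real.exp ε *
            ((volume.withDensity fun x =>
                ENNReal.ofReal (Real.exp (-x) / (1 + Real.exp (-x)) ^ 2))
              {x | s * x ∈ S}).toReal + δ) ↔
      Δ / s ≤ 2 * Real.log
        ((Real.exp (ε / 2) + Real.sqrt (δ * (Real.exp ε + δ - 1))) / (1 - δ)) := by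
  refine (forall_abs_le_iff_forall_isShiftPrivate (μ := logisticMeasure) hs).trans ?_
  simp only [isShiftPrivate_logisticMeasure_iff_abs_le hε hδ0 hδ1]
  have hΔs : |Δ / s| = Δ / s := abs_of_pos (div_pos hΔ hs)
  exact ⟨fun h => hΔs ▸ h _ hΔs.le, fun h c hc => hc.trans h⟩
end

section
/- Let X ~ f where f(x) = e^{−ψ(x)}, ψ : ℝ → (−∞, ∞] convex and even, with support of f equal to (−a, a), a ∈ (0, ∞]. For a real-valued query q with global sensitivity Δ ≥ 0 and scale s > 0, the mechanism returning q(d) + sX is (ε, δ)-differentially private if and only if F((Δ − t)/s) − e^ε F(−t/s) ≤ δ, where F is the CDF of f and t = sup{z < a s : ψ(z/s) − ψ((z − Δ)/s) ≤ ε}. -/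
/-!
Log-concavity makes the likelihood ratio `z ↦ f (z - c) / f z` nondecreasing, so the set where
`f (z - c) ≤ e^ε f z` is a half-line up to some `t` (inside the support), and for every event `A`
the excess `μ (A - c) - e^ε μ A` is largest for `A = (t, ∞)`. That tail excess grows with the shift
`c`, so the extreme neighbours at distance `Δ` are the worst case; evenness turns the tail into
values of `F`, reflection handles negative shifts, and the substitution `x ↦ x / s` removes the
scale.
-/

open MeasureTheory Set
open scoped Pointwise

def IsLogConcave (f : ℝ → ℝ) : Prop :=
  ∀ x y t : ℝ, t ∈ Icc (0:ℝ) 1 → f x ^ t * f y ^ (1 - t) ≤ f (t * x + (1 - t) * y)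

def ratioSublevelSet (f : ℝ → ℝ) (a : EReal) (E c : ℝ) : Set ℝ :=
  {z : ℝ | (z : EReal) < a ∧ f (z - c) ≤ E * f z}

/-- `μ (A - c) - E μ A` for the measure `μ` with density `f`. -/
noncomputable def shiftExcess (f : ℝ → ℝ) (E c : ℝ) (A : Set ℝ) : ℝ :=
  (∫ x in A, f (x - c)) - E * ∫ x in A, f x

lemma setIntegral_le_setIntegral_Ioi {g : ℝ → ℝ} (hg : Integrable g) {w : ℝ}
    (hneg : ∀ z < w, g z ≤ 0) (hpos : ∀ z, w < z → 0 ≤ g z) {A : Set ℝ}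
    (hA : MeasurableSet A) : ∫ x in A, g x ≤ ∫ x in Ioi w, g x := by
  have hsplit : ∫ x in A, g x = (∫ x in A ∩ Iio w, g x) + ∫ x in A ∩ Ici w, g x := by
    rw [← setIntegral_union
        (Disjoint.mono inter_subset_right inter_subset_right (Iio_disjoint_Ici le_rfl))
        (hA.inter measurableSet_Ici) hg.integrableOn hg.integrableOn,
      ← inter_union_distrib_left, Iio_union_Ici, inter_univ]
  have hleft : ∫ x in A ∩ Iio w, g x ≤ 0 :=
    setIntegral_nonpos (hA.inter measurableSet_Iio) fun x hx => hneg x hx.2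
  have hright : ∫ x in A ∩ Ici w, g x ≤ ∫ x in Ioi w, g x := by
    rw [setIntegral_congr_set (ae_eq_set_inter (ae_eq_refl A) Ioi_ae_eq_Ici.symm)]
    exact setIntegral_mono_set hg.integrableOn
      ((ae_restrict_iff' measurableSet_Ioi).2 (ae_of_all _ hpos))
      inter_subset_right.eventuallyLE
  linarith

lemma setIntegral_preimage_add_right (g : ℝ → ℝ) (b : ℝ) (B : Set ℝ) :
    ∫ x in (· + b) ⁻¹' B, g x = ∫ x in B, g (x - b) := by
  simpa using (measurePreserving_add_right volume b).setIntegral_preimage_emb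
    (measurableEmbedding_addRight b) (fun x => g (x - b)) B

lemma setIntegral_neg_set (g : ℝ → ℝ) (A : Set ℝ) :
    ∫ x in -A, g x = ∫ x in A, g (-x) := by
  simpa using ((Measure.measurePreserving_neg volume).setIntegral_preimage_emb
    (Homeomorph.neg ℝ).isClosedEmbedding.measurableEmbedding g (-A)).symm

lemma setIntegral_Ioi_comp_sub (g : ℝ → ℝ) (w c : ℝ) :
    ∫ x in Ioi w, g (x - c) = ∫ x in Ioi (w - c), g x := by
  rw [← setIntegral_preimage_add_right g c, preimage_add_const_Ioi]

section

variable {f : ℝ → ℝ} {a : EReal} {E c : ℝ}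

namespace IsLogConcave

/-- Monotone likelihood ratio: `z ↦ f (z - d) / f z` is nondecreasing. -/
lemma apply_sub_mul_le (hf0 : ∀ x, 0 ≤ f x) (hf : IsLogConcave f) {x y d : ℝ}
    (hxy : x ≤ y) (hd : 0 ≤ d) : f (x - d) * f y ≤ f x * f (y - d) := by
  rcases hd.eq_or_lt with rfl | hd
  · simp only [sub_zero, le_refl]
  rcases (hf0 (x - d)).eq_or_lt with hx | hx
  · rw [← hx, zero_mul]; exact mul_nonneg (hf0 _) (hf0 _)
  rcases (hf0 y).eq_or_lt with hy | hy
  · rw [← hy, mul_zero]; exact mul_nonneg (hf0 _) (hf0 _)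
  -- `x` and `y - d` are the convex combinations of `x - d` and `y` with swapped weights.
  set β := (y - x) / (y - x + d)
  have hden : 0 < y - x + d := by linarith
  have hβd : β * (y - x + d) = y - x := div_mul_cancel₀ _ hden.ne'
  have hβ0 : 0 ≤ β := div_nonneg (by linarith) hden.le
  have hβ1 : β ≤ 1 := (div_le_one hden).2 (by linarith)
  have hx' : f (x - d) ^ β * f y ^ (1 - β) ≤ f x := by
    convert hf (x - d) y β ⟨hβ0, hβ1⟩ using 2
    linear_combination hβd
  have hy' : f (x - d) ^ (1 - β) * f y ^ β ≤ f (y - d) := by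
    convert hf (x - d) y (1 - β) ⟨by linarith, by linarith⟩ using 3
    · ring
    · linear_combination -hβd
  calc f (x - d) * f y
      = (f (x - d) ^ β * f y ^ (1 - β)) * (f (x - d) ^ (1 - β) * f y ^ β) := by
        rw [mul_mul_mul_comm, ← Real.rpow_add hx, ← Real.rpow_add hy, add_sub_cancel,
          sub_add_cancel, Real.rpow_one, Real.rpow_one]
    _ ≤ f x * f (y - d) := mul_le_mul hx' hy' (by positivity) (hf0 x)

lemma apply_le_apply_zero (hf0 : ∀ x, 0 ≤ f x) (hf : IsLogConcave f)
    (heven : ∀ x, f (-x) = f x) (x : ℝ) : f x ≤ f 0 := by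
  rcases (hf0 x).eq_or_lt with hx | hx
  · rw [← hx]; exact hf0 0
  have h := hf x (-x) (1 / 2) ⟨by norm_num, by norm_num⟩
  rwa [heven, ← Real.rpow_add hx, show (1:ℝ) / 2 * x + (1 - 1 / 2) * -x = 0 by ring,
    show (1:ℝ) / 2 + (1 - 1 / 2) = 1 by norm_num, Real.rpow_one] at h

end IsLogConcave

lemma apply_eq_zero_of_notMem_support (hf0 : ∀ x, 0 ≤ f x)
    (hsupp : {x : ℝ | 0 < f x} = {x : ℝ | -a < (x : EReal) ∧ (x : EReal) < a}) {z : ℝ}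
    (hz : ¬(-a < (z : EReal) ∧ (z : EReal) < a)) : f z = 0 :=
  (hf0 z).antisymm' <| not_lt.1 fun hpos => hz ((Set.ext_iff.1 hsupp z).1 hpos)

lemma zero_mem_ratioSublevelSet (hf0 : ∀ x, 0 ≤ f x) (hf : IsLogConcave f)
    (heven : ∀ x, f (-x) = f x) (ha : 0 < a) (hE : 1 ≤ E) (c : ℝ) :
    0 ∈ ratioSublevelSet f a E c := by
  refine ⟨mod_cast ha, ?_⟩
  rw [zero_sub, heven]
  exact (hf.apply_le_apply_zero hf0 heven c).trans (le_mul_of_one_le_left (hf0 0) hE)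

lemma IsLogConcave.apply_sub_le_of_le_of_mem (hf0 : ∀ x, 0 ≤ f x) (hf : IsLogConcave f)
    (hsupp : {x : ℝ | 0 < f x} = {x : ℝ | -a < (x : EReal) ∧ (x : EReal) < a})
    (hE : 0 ≤ E) (hc : 0 ≤ c) {z z' : ℝ} (hzz : z ≤ z') (hz' : z' ∈ ratioSublevelSet f a E c) :
    f (z - c) ≤ E * f z := by
  rcases (hf0 z').eq_or_lt with h0 | hpos
  · -- `z'` lies at or below the left end `-a` of the support, and so does `z - c`.
    have hz'a : (z' : EReal) ≤ -a := by
      by_contra! h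
      exact ((Set.ext_iff.1 hsupp z').2 ⟨h, hz'.1⟩).ne h0
    rw [apply_eq_zero_of_notMem_support hf0 hsupp fun h => h.1.not_ge <|
      (show ((z - c : ℝ) : EReal) ≤ z' from mod_cast by linarith).trans hz'a]
    exact mul_nonneg hE (hf0 z)
  · refine le_of_mul_le_mul_right ?_ hpos
    calc f (z - c) * f z' ≤ f z * f (z' - c) := hf.apply_sub_mul_le hf0 hzz hc
      _ ≤ f z * (E * f z') := mul_le_mul_of_nonneg_left hz'.2 (hf0 z)
      _ = E * f z * f z' := by ring

lemma le_apply_sub_of_isLUB_lt (hf0 : ∀ x, 0 ≤ f x)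
    (hsupp : {x : ℝ | 0 < f x} = {x : ℝ | -a < (x : EReal) ∧ (x : EReal) < a}) {w z : ℝ}
    (hw : IsLUB (ratioSublevelSet f a E c) w) (hz : w < z) : E * f z ≤ f (z - c) := by
  have hz' : z ∉ ratioSublevelSet f a E c := fun h => (hw.1 h).not_gt hz
  by_cases hza : (z : EReal) < a
  · exact (not_le.1 fun h => hz' ⟨hza, h⟩).le
  · rw [apply_eq_zero_of_notMem_support hf0 hsupp fun h => hza h.2, mul_zero]
    exact hf0 _

lemma shiftExcess_neg (heven : ∀ x, f (-x) = f x) (A : Set ℝ) :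
    shiftExcess f E (-c) (-A) = shiftExcess f E c A := by
  simp only [shiftExcess, setIntegral_neg_set, heven, sub_neg_eq_add,
    show ∀ x, -x + c = -(x - c) from fun x => by ring]

lemma shiftExcess_Ioi (heven : ∀ x, f (-x) = f x) (w : ℝ) :
    shiftExcess f E c (Ioi w) = (∫ x in Iic (c - w), f x) - E * ∫ x in Iic (-w), f x := by
  have htail (u : ℝ) : ∫ x in Ioi u, f x = ∫ x in Iic (-u), f x := by
    simpa only [heven] using integral_comp_neg_Ioi u f
  rw [shiftExcess, setIntegral_Ioi_comp_sub, htail, htail, neg_sub]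

lemma shiftExcess_Ioi_mono (hf0 : ∀ x, 0 ≤ f x) (hInt : Integrable f) {c' : ℝ} (hcc' : c ≤ c')
    (w : ℝ) : shiftExcess f E c (Ioi w) ≤ shiftExcess f E c' (Ioi w) := by
  simp only [shiftExcess, setIntegral_Ioi_comp_sub]
  exact sub_le_sub_right (setIntegral_mono_set hInt.integrableOn (ae_of_all _ fun x => hf0 x)
    (Ioi_subset_Ioi (by linarith)).eventuallyLE) _

lemma shiftExcess_eq_setIntegral (hInt : Integrable f) (A : Set ℝ) :
    shiftExcess f E c A = ∫ x in A, (f (x - c) - E * f x) := by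
  rw [shiftExcess, integral_sub (hInt.comp_sub_right c).integrableOn
    (hInt.const_mul E).integrableOn, integral_const_mul]

lemma shiftExcess_nonpos (hInt : Integrable f) (h : ∀ z, f (z - c) ≤ E * f z) (A : Set ℝ) :
    shiftExcess f E c A ≤ 0 := by
  rw [shiftExcess_eq_setIntegral hInt]
  exact setIntegral_nonpos_of_ae (ae_of_all _ fun x => sub_nonpos.2 (h x))

lemma shiftExcess_le_shiftExcess_Ioi (hf0 : ∀ x, 0 ≤ f x) (hf : IsLogConcave f)
    (hsupp : {x : ℝ | 0 < f x} = {x : ℝ | -a < (x : EReal) ∧ (x : EReal) < a})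
    (hInt : Integrable f) (hE : 0 ≤ E) (hc : 0 ≤ c) {w : ℝ}
    (hw : IsLUB (ratioSublevelSet f a E c) w) {A : Set ℝ} (hA : MeasurableSet A) :
    shiftExcess f E c A ≤ shiftExcess f E c (Ioi w) := by
  simp only [shiftExcess_eq_setIntegral hInt]
  refine setIntegral_le_setIntegral_Ioi ((hInt.comp_sub_right c).sub (hInt.const_mul E))
    (fun z hz => ?_) (fun z hz => sub_nonneg.2 (le_apply_sub_of_isLUB_lt hf0 hsupp hw hz)) hA
  obtain ⟨z', hz', hzz', -⟩ := hw.exists_between hz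
  exact sub_nonpos.2 (hf.apply_sub_le_of_le_of_mem hf0 hsupp hE hc hzz'.le hz')

lemma shiftExcess_le_of_isLUB (hf0 : ∀ x, 0 ≤ f x) (hf : IsLogConcave f)
    (heven : ∀ x, f (-x) = f x)
    (hsupp : {x : ℝ | 0 < f x} = {x : ℝ | -a < (x : EReal) ∧ (x : EReal) < a}) (ha : 0 < a)
    (hInt : Integrable f) (hE : 1 ≤ E) (hc : 0 ≤ c) {δ : ℝ} (hδ : 0 ≤ δ)
    (H : ∀ w, IsLUB (ratioSublevelSet f a E c) w → shiftExcess f E c (Ioi w) ≤ δ)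
    {A : Set ℝ} (hA : MeasurableSet A) : shiftExcess f E c A ≤ δ := by
  by_cases hbdd : BddAbove (ratioSublevelSet f a E c)
  · have hw := isLUB_csSup ⟨0, zero_mem_ratioSublevelSet hf0 hf heven ha hE c⟩ hbdd
    exact (shiftExcess_le_shiftExcess_Ioi hf0 hf hsupp hInt (by linarith) hc hw hA).trans
      (H _ hw)
  · refine (shiftExcess_nonpos hInt (fun z => ?_) A).trans hδ
    obtain ⟨z', hz', hzz'⟩ := not_bddAbove_iff.1 hbdd z
    exact hf.apply_sub_le_of_le_of_mem hf0 hsupp (by linarith) hc hzz'.le hz'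

theorem shiftExcess_le_iff (hf0 : ∀ x, 0 ≤ f x) (hf : IsLogConcave f)
    (heven : ∀ x, f (-x) = f x)
    (hsupp : {x : ℝ | 0 < f x} = {x : ℝ | -a < (x : EReal) ∧ (x : EReal) < a}) (ha : 0 < a)
    (hInt : Integrable f) (hE : 1 ≤ E) {Δ δ : ℝ} (hΔ : 0 ≤ Δ) (hδ : 0 ≤ δ) :
    (∀ c, |c| ≤ Δ → ∀ A, MeasurableSet A → shiftExcess f E c A ≤ δ) ↔
      ∀ w, IsLUB (ratioSublevelSet f a E Δ) w →
        (∫ x in Iic (Δ - w), f x) - E * ∫ x in Iic (-w), f x ≤ δ := by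
  simp only [← shiftExcess_Ioi heven]
  refine ⟨fun h w _ => h Δ (abs_of_nonneg hΔ).le _ measurableSet_Ioi, fun H => ?_⟩
  have hΔA {A : Set ℝ} (hA : MeasurableSet A) : shiftExcess f E Δ A ≤ δ :=
    shiftExcess_le_of_isLUB hf0 hf heven hsupp ha hInt hE hΔ hδ H hA
  -- The tail excess grows with the shift, so the shift `Δ` is the worst one.
  have hnonneg (c : ℝ) (hc : 0 ≤ c) (hcΔ : c ≤ Δ) {A : Set ℝ} (hA : MeasurableSet A) :
      shiftExcess f E c A ≤ δ :=
    shiftExcess_le_of_isLUB hf0 hf heven hsupp ha hInt hE hc hδ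
      (fun w _ => (shiftExcess_Ioi_mono hf0 hInt hcΔ w).trans (hΔA measurableSet_Ioi)) hA
  intro c hc A hA
  rcases le_total 0 c with hc0 | hc0
  · exact hnonneg c hc0 ((le_abs_self c).trans hc) hA
  · have h := hnonneg (-c) (neg_nonneg.2 hc0) ((neg_le_abs c).trans hc) hA.neg
    rwa [← shiftExcess_neg heven, neg_neg, neg_neg] at h

lemma toReal_withDensity_ofReal (hmeas : Measurable f) (hf0 : ∀ x, 0 ≤ f x) {T : Set ℝ}
    (hT : MeasurableSet T) :
    ((volume.withDensity fun x => ENNReal.ofReal (f x)) T).toReal = ∫ x in T, f x := by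
  rw [withDensity_apply _ hT,
    integral_eq_lintegral_of_nonneg_ae (ae_of_all _ hf0) hmeas.aestronglyMeasurable]

lemma toReal_withDensity_affine_preimage (hmeas : Measurable f) (hf0 : ∀ x, 0 ≤ f x)
    {s : ℝ} (hs : s ≠ 0) (t₀ : ℝ) {S : Set ℝ} (hS : MeasurableSet S) :
    ((volume.withDensity fun x => ENNReal.ofReal (f x)) {x | t₀ + s * x ∈ S}).toReal =
      ∫ x in {x | s * x ∈ S}, f (x - t₀ / s) := by
  have hpre : {x | t₀ + s * x ∈ S} = (· + t₀ / s) ⁻¹' {x | s * x ∈ S} := by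
    ext x
    simp only [mem_ofPred_eq, mem_preimage, mul_add, mul_div_cancel₀ _ hs, add_comm]
  rw [toReal_withDensity_ofReal hmeas hf0 (T := {x | t₀ + s * x ∈ S})
    (measurableSet_preimage (by fun_prop) hS), hpre, setIntegral_preimage_add_right]

lemma privacy_iff_shiftExcess_le (hmeas : Measurable f) (hf0 : ∀ x, 0 ≤ f x) {s : ℝ}
    (hs : 0 < s) (Δ δ : ℝ) :
    (∀ t₀ : ℝ, |t₀| ≤ Δ → ∀ S : Set ℝ, MeasurableSet S →
        ((volume.withDensity fun x => ENNReal.ofReal (f x)) {x | t₀ + s * x ∈ S}).toReal ≤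
          E * ((volume.withDensity fun x => ENNReal.ofReal (f x)) {x | s * x ∈ S}).toReal
            + δ) ↔
      ∀ c, |c| ≤ Δ / s → ∀ A, MeasurableSet A → shiftExcess f E c A ≤ δ := by
  have hscale {S : Set ℝ} (hS : MeasurableSet S) : MeasurableSet {x | s * x ∈ S} :=
    measurableSet_preimage (by fun_prop) hS
  have hiff (t₀ : ℝ) {S : Set ℝ} (hS : MeasurableSet S) :
      ((volume.withDensity fun x => ENNReal.ofReal (f x)) {x | t₀ + s * x ∈ S}).toReal ≤
          E * ((volume.withDensity fun x => ENNReal.ofReal (f x)) {x | s * x ∈ S}).toReal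
            + δ ↔ shiftExcess f E (t₀ / s) {x | s * x ∈ S} ≤ δ := by
    rw [toReal_withDensity_affine_preimage hmeas hf0 hs.ne' t₀ hS,
      toReal_withDensity_ofReal hmeas hf0 (hscale hS), shiftExcess, sub_le_iff_le_add']
  refine ⟨fun h c hc A hA => ?_, fun h t₀ ht₀ S hS => (hiff t₀ hS).2 <| h _ ?_ _ (hscale hS)⟩
  · have hS : MeasurableSet {y | y / s ∈ A} := measurableSet_preimage (by fun_prop) hA
    have hcs : |s * c| ≤ Δ := by rwa [abs_mul, abs_of_pos hs, ← le_div_iff₀' hs]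
    simpa only [mul_div_cancel_left₀ _ hs.ne', mem_ofPred_eq, ofPred_mem_eq] using
      (hiff (s * c) hS).1 (h _ hcs _ hS)
  · rwa [abs_div, abs_of_pos hs, div_le_div_iff_of_pos_right hs]

lemma isLUB_scaled_ratioSublevelSet_iff {s : ℝ} (hs : 0 < s) (Δ t : ℝ) :
    IsLUB {z : ℝ | (z : EReal) < a * (s : EReal) ∧ f ((z - Δ) / s) ≤ E * f (z / s)} t ↔
      IsLUB (ratioSublevelSet f a E (Δ / s)) (t / s) := by
  have hset : {z : ℝ | (z : EReal) < a * (s : EReal) ∧ f ((z - Δ) / s) ≤ E * f (z / s)} =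
      OrderIso.divRight₀ s hs ⁻¹' ratioSublevelSet f a E (Δ / s) := by
    ext z
    simp only [ratioSublevelSet, mem_preimage, OrderIso.divRight₀_apply, mem_ofPred_eq, sub_div,
      EReal.coe_div, EReal.div_lt_iff (EReal.coe_pos.2 hs) (EReal.coe_ne_top s)]
  rw [hset, OrderIso.isLUB_preimage, OrderIso.divRight₀_apply]

end

theorem necc_suff_condition_general (f : ℝ → ℝ) (hmeas : Measurable f)
    (hnonneg : ∀ x, 0 ≤ f x) (hint : ∫ x, f x = 1)
    (hlc : ∀ x y t : ℝ, t ∈ Set.Icc (0:ℝ) 1 →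
      f x ^ t * f y ^ (1 - t) ≤ f (t * x + (1 - t) * y))
    (heven : ∀ x, f (-x) = f x)
    (a : EReal) (ha : 0 < a)
    (hsupp : {x : ℝ | 0 < f x} = {x : ℝ | -a < (x : EReal) ∧ (x : EReal) < a})
    (Δ : ℝ) (hΔ : 0 ≤ Δ) (s : ℝ) (hs : 0 < s) (ε δ : ℝ) (hε : 0 ≤ ε) (hδ : 0 ≤ δ) :
    (∀ t₀ : ℝ, |t₀| ≤ Δ → ∀ S : Set ℝ, MeasurableSet S →
        ((volume.withDensity fun x => ENNReal.ofReal (f x))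
            {x | t₀ + s * x ∈ S}).toReal ≤
          Real.exp ε *
            ((volume.withDensity fun x => ENNReal.ofReal (f x))
              {x | s * x ∈ S}).toReal + δ) ↔
      (∀ t : ℝ,
        IsLUB {z : ℝ | (z : EReal) < a * (s : EReal) ∧
            f ((z - Δ) / s) ≤ Real.exp ε * f (z / s)} t →
        (∫ u in Set.Iic ((Δ - t) / s), f u) -
            Real.exp ε * (∫ u in Set.Iic (-t / s), f u) ≤ δ) := by
  have hInt : Integrable f := .of_integral_ne_zero (by rw [hint]; exact one_ne_zero)
  rw [privacy_iff_shiftExcess_le hmeas hnonneg hs,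
    shiftExcess_le_iff hnonneg hlc heven hsupp ha hInt (Real.one_le_exp hε)
      (div_nonneg hΔ hs.le) hδ]
  have hscale := isLUB_scaled_ratioSublevelSet_iff (f := f) (a := a) (E := Real.exp ε) hs Δ
  refine ⟨fun H t ht => ?_, fun H w hw => ?_⟩
  · simpa only [sub_div, neg_div] using H (t / s) ((hscale t).1 ht)
  · have h := H (s * w) ((hscale _).2 (by rwa [mul_div_cancel_left₀ _ hs.ne']))
    rwa [sub_div, neg_div, mul_div_cancel_left₀ _ hs.ne'] at h

/-- Necessary and sufficient condition for `(ε, δ)`-differential privacy of a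
mechanism adding symmetric log-concave noise `sX`, `X ~ f = e^{−ψ}` with
support `(−a, a)`: privacy holds iff `F((Δ−t)/s) − e^ε F(−t/s) ≤ δ` where
`t = sup{z < as : f((z−Δ)/s) ≤ e^ε f(z/s)}` (the condition
`ψ(z/s) − ψ((z−Δ)/s) ≤ ε` expressed through the density). -/
theorem necc_suff_condition (f : ℝ → ℝ) (hmeas : Measurable f)
    (hnonneg : ∀ x, 0 ≤ f x) (hint : ∫ x, f x = 1)
    (hlc : ∀ x y t : ℝ, t ∈ Set.Icc (0:ℝ) 1 →
      f x ^ t * f y ^ (1 - t) ≤ f (t * x + (1 - t) * y))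
    (heven : ∀ x, f (-x) = f x)
    (hlsc : LowerSemicontinuous f)
    (a : EReal) (ha : 0 < a)
    (hsupp : {x : ℝ | 0 < f x} = {x : ℝ | -a < (x : EReal) ∧ (x : EReal) < a})
    (Δ : ℝ) (hΔ : 0 ≤ Δ) (s : ℝ) (hs : 0 < s) (ε δ : ℝ) (hε : 0 ≤ ε) (hδ : 0 ≤ δ) :
    (∀ t₀ : ℝ, |t₀| ≤ Δ → ∀ S : Set ℝ, MeasurableSet S →
        ((volume.withDensity fun x => ENNReal.ofReal (f x))
            {x | t₀ + s * x ∈ S}).toReal ≤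
          Real.exp ε *
            ((volume.withDensity fun x => ENNReal.ofReal (f x))
              {x | s * x ∈ S}).toReal + δ) ↔
      (∀ t : ℝ,
        IsLUB {z : ℝ | (z : EReal) < a * (s : EReal) ∧
            f ((z - Δ) / s) ≤ Real.exp ε * f (z / s)} t →
        (∫ u in Set.Iic ((Δ - t) / s), f u) -
            Real.exp ε * (∫ u in Set.Iic (-t / s), f u) ≤ δ) :=
  necc_suff_condition_general f hmeas hnonneg hint hlc heven a ha hsupp Δ hΔ s hs ε δ hε hδ
end

section
/- Under the hypotheses of the necessary-and-sufficient condition for log-concave symmetric mechanisms: if the criterion F((Δ − t)/s) − e^ε F(−t/s) ≤ δ holds at scale s > 0 (with t defined as the appropriate supremum depending on s), then it also holds for every scale s' > s. -/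
/-!
Write `F` for the distribution function of `f`, `c = Δ / s` and `G w = F (c - w) - e^ε F (-w)`;
the criterion at scale `s` is `G (t / s)`. Since `G' w = e^ε f w - f (w - c)` and log-concavity
makes the likelihood ratio `f (w - c) / f w` nondecreasing, `G` increases up to `t / s` and
decreases after it, so `G (t / s)` is the maximum of `G` (when the set defining `t` is unbounded,
`G` is nondecreasing with limit `0`). At a larger scale the shift `Δ / s'` is smaller; as `F` is
nondecreasing, the criterion at `s'` for any `t'` is at most `G (t' / s' + Δ / s - Δ / s')`.
-/

open MeasureTheory Set Filter Topology

section

variable {f : ℝ → ℝ}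

section LogConcave

theorem apply_le_apply_zero_of_logConcave (hnonneg : ∀ x, 0 ≤ f x)
    (hlc : ∀ x y t : ℝ, t ∈ Icc (0:ℝ) 1 → f x ^ t * f y ^ (1 - t) ≤ f (t * x + (1 - t) * y))
    (heven : ∀ x, f (-x) = f x) (x : ℝ) : f x ≤ f 0 := by
  have h := hlc x (-x) (1 / 2) ⟨by norm_num, by norm_num⟩
  rw [heven, show 1 - (1 : ℝ) / 2 = 1 / 2 by norm_num, ← Real.rpow_add' (hnonneg x) (by norm_num),
    show (1 : ℝ) / 2 + 1 / 2 = 1 by norm_num, Real.rpow_one] at h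
  simpa using h

theorem apply_sub_mul_le_of_logConcave (hnonneg : ∀ x, 0 ≤ f x)
    (hlc : ∀ x y t : ℝ, t ∈ Icc (0:ℝ) 1 → f x ^ t * f y ^ (1 - t) ≤ f (t * x + (1 - t) * y))
    {u v e : ℝ} (huv : u ≤ v) (he : 0 ≤ e) : f (u - e) * f v ≤ f (v - e) * f u := by
  rcases (add_nonneg (sub_nonneg.mpr huv) he).eq_or_lt with hd | hd
  · obtain rfl : e = 0 := by linarith
    obtain rfl : u = v := by linarith
    exact le_rfl
  -- `u` and `v - e` are the two convex combinations of `u - e` and `v` with swapped weights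
  set T := (v - u) / (v - u + e)
  have hT : T ∈ Icc (0:ℝ) 1 :=
    ⟨div_nonneg (by linarith) hd.le, by rw [div_le_one hd]; linarith⟩
  have h1 := hlc (u - e) v T hT
  have h2 := hlc (u - e) v (1 - T) ⟨by linarith [hT.2], by linarith [hT.1]⟩
  rw [show T * (u - e) + (1 - T) * v = u by simp only [T]; field_simp; ring] at h1
  rw [show (1 - T) * (u - e) + (1 - (1 - T)) * v = v - e by simp only [T]; field_simp; ring] at h2
  calc f (u - e) * f v
      = f (u - e) ^ T * f v ^ (1 - T) * (f (u - e) ^ (1 - T) * f v ^ (1 - (1 - T))) := by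
        rw [sub_sub_cancel, mul_mul_mul_comm, ← Real.rpow_add' (hnonneg _) (by norm_num),
          ← Real.rpow_add' (hnonneg _) (by norm_num), add_sub_cancel, sub_add_cancel,
          Real.rpow_one, Real.rpow_one]
    _ ≤ f u * f (v - e) := mul_le_mul h1 h2
        (mul_nonneg (Real.rpow_nonneg (hnonneg _) _) (Real.rpow_nonneg (hnonneg _) _)) (hnonneg u)
    _ = f (v - e) * f u := mul_comm _ _

end LogConcave

section RatioBound

/-- For `K = e^ε` and `c = Δ / s`, the image under `z ↦ z / s` of the set whose supremum is
`t(s)`. -/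
def ratioBoundSet (f : ℝ → ℝ) (a : EReal) (K c : ℝ) : Set ℝ :=
  {u | (u : EReal) < a ∧ f (u - c) ≤ K * f u}

variable {a : EReal} {K c : ℝ}

theorem zero_mem_ratioBoundSet (hnonneg : ∀ x, 0 ≤ f x)
    (hlc : ∀ x y t : ℝ, t ∈ Icc (0:ℝ) 1 → f x ^ t * f y ^ (1 - t) ≤ f (t * x + (1 - t) * y))
    (heven : ∀ x, f (-x) = f x) (ha : 0 < a) (hK : 1 ≤ K) : 0 ∈ ratioBoundSet f a K c := by
  refine ⟨by exact_mod_cast ha, ?_⟩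
  rw [zero_sub, heven]
  exact (apply_le_apply_zero_of_logConcave hnonneg hlc heven c).trans
    (le_mul_of_one_le_left (hnonneg 0) hK)

theorem le_of_le_mem_ratioBoundSet (hnonneg : ∀ x, 0 ≤ f x)
    (hlc : ∀ x y t : ℝ, t ∈ Icc (0:ℝ) 1 → f x ^ t * f y ^ (1 - t) ≤ f (t * x + (1 - t) * y))
    (hsupp : {x : ℝ | 0 < f x} = {x : ℝ | -a < (x : EReal) ∧ (x : EReal) < a})
    (hK : 0 ≤ K) (hc : 0 ≤ c) {u v : ℝ} (hv : v ∈ ratioBoundSet f a K c) (huv : u ≤ v) :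
    f (u - c) ≤ K * f u := by
  obtain ⟨hva, hvK⟩ := hv
  rcases (hnonneg v).eq_or_lt with hv0 | hvpos
  · -- `f v = 0` below `a` puts `v`, hence `u - c`, left of the support
    have hpos := Set.ext_iff.mp hsupp
    have hv_le : (v : EReal) ≤ -a := by
      by_contra! h
      exact (hpos v).mpr ⟨h, hva⟩ |>.ne' hv0.symm
    have huc : f (u - c) = 0 := by
      refine le_antisymm (not_lt.mp fun h => ?_) (hnonneg _)
      have := ((hpos _).mp h).1
      have : ((u - c : ℝ) : EReal) ≤ v := EReal.coe_le_coe_iff.mpr (by linarith)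
      exact absurd hv_le (by order)
    rw [huc]
    exact mul_nonneg hK (hnonneg u)
  · refine le_of_mul_le_mul_right ?_ hvpos
    calc f (u - c) * f v ≤ f (v - c) * f u := apply_sub_mul_le_of_logConcave hnonneg hlc huv hc
      _ ≤ K * f v * f u := mul_le_mul_of_nonneg_right hvK (hnonneg u)
      _ = K * f u * f v := by ring

theorem le_of_notMem_ratioBoundSet (hnonneg : ∀ x, 0 ≤ f x)
    (hsupp : {x : ℝ | 0 < f x} = {x : ℝ | -a < (x : EReal) ∧ (x : EReal) < a})
    {u : ℝ} (hu : u ∉ ratioBoundSet f a K c) : K * f u ≤ f (u - c) := by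
  by_cases hua : (u : EReal) < a
  · exact (not_le.mp fun h => hu ⟨hua, h⟩).le
  · have hu0 : f u = 0 :=
      le_antisymm (not_lt.mp fun h => hua ((Set.ext_iff.mp hsupp u).mp h).2) (hnonneg u)
    rw [hu0, mul_zero]
    exact hnonneg _

end RatioBound

section CdfGap

/-- For `K = e^ε` and `c = Δ / s`, `cdfGap f K c (t / s)` is the criterion at scale `s`. -/
noncomputable def cdfGap (f : ℝ → ℝ) (K c w : ℝ) : ℝ :=
  (∫ u in Iic (c - w), f u) - K * ∫ u in Iic (-w), f u

variable {K c : ℝ}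

theorem cdfGap_sub_cdfGap (hf : Integrable f) (heven : ∀ x, f (-x) = f x) (w w' : ℝ) :
    cdfGap f K c w' - cdfGap f K c w = ∫ u in w..w', (K * f u - f (u - c)) := by
  have hF : ∀ x y : ℝ, (∫ u in Iic x, f u) - ∫ u in Iic y, f u = ∫ u in -x..-y, f u := by
    intro x y
    rw [intervalIntegral.integral_Iic_sub_Iic hf.integrableOn hf.integrableOn,
      ← intervalIntegral.integral_comp_neg]
    simp only [heven]
  have hshifted :
      (∫ u in Iic (c - w), f u) - ∫ u in Iic (c - w'), f u = ∫ u in w..w', f (u - c) := by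
    rw [hF, intervalIntegral.integral_comp_sub_right, neg_sub, neg_sub]
  have hreflected : (∫ u in Iic (-w), f u) - ∫ u in Iic (-w'), f u = ∫ u in w..w', f u := by
    rw [hF, neg_neg, neg_neg]
  have hshift : IntervalIntegrable (fun u => f (u - c)) volume w w' := by
    simpa using (hf.intervalIntegrable (a := w - c) (b := w' - c)).comp_sub_right c
  rw [intervalIntegral.integral_sub (hf.intervalIntegrable.const_mul K) hshift,
    intervalIntegral.integral_const_mul, ← hshifted, ← hreflected]
  unfold cdfGap
  ring

theorem cdfGap_le_of_forall_Ioo_le (hf : Integrable f) (heven : ∀ x, f (-x) = f x) {w w' : ℝ}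
    (hww' : w ≤ w') (h : ∀ u ∈ Ioo w w', f (u - c) ≤ K * f u) :
    cdfGap f K c w ≤ cdfGap f K c w' := by
  rw [← sub_nonneg, cdfGap_sub_cdfGap hf heven, intervalIntegral.integral_of_le hww',
    integral_Ioc_eq_integral_Ioo]
  exact setIntegral_nonneg measurableSet_Ioo fun u hu => sub_nonneg.mpr (h u hu)

theorem cdfGap_le_of_forall_Ioo_ge (hf : Integrable f) (heven : ∀ x, f (-x) = f x) {w w' : ℝ}
    (hww' : w ≤ w') (h : ∀ u ∈ Ioo w w', K * f u ≤ f (u - c)) :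
    cdfGap f K c w' ≤ cdfGap f K c w := by
  rw [← sub_nonpos, cdfGap_sub_cdfGap hf heven, intervalIntegral.integral_of_le hww',
    integral_Ioc_eq_integral_Ioo]
  exact setIntegral_nonpos measurableSet_Ioo fun u hu => sub_nonpos.mpr (h u hu)

theorem cdfGap_le_of_threshold (hf : Integrable f) (heven : ∀ x, f (-x) = f x) {τ : ℝ}
    (hlt : ∀ u < τ, f (u - c) ≤ K * f u) (hgt : ∀ u, τ < u → K * f u ≤ f (u - c)) (w : ℝ) :
    cdfGap f K c w ≤ cdfGap f K c τ := by
  rcases le_total w τ with hwτ | hτw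
  · exact cdfGap_le_of_forall_Ioo_le hf heven hwτ fun u hu => hlt u hu.2
  · exact cdfGap_le_of_forall_Ioo_ge hf heven hτw fun u hu => hgt u hu.1

theorem cdfGap_nonpos_of_forall (hf : Integrable f) (heven : ∀ x, f (-x) = f x)
    (hnonneg : ∀ x, 0 ≤ f x) (hK : 0 ≤ K) (h : ∀ u, f (u - c) ≤ K * f u) (w : ℝ) :
    cdfGap f K c w ≤ 0 := by
  have hlim : Tendsto (fun w' => ∫ u in Iic (c - w'), f u) atTop (𝓝 0) := by
    refine tendsto_integral_Iic_zero ?_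
    exact (tendsto_atBot_add_const_left atTop c tendsto_neg_atTop_atBot).congr
      fun w' => (sub_eq_add_neg c w').symm
  refine ge_of_tendsto hlim (eventually_ge_atTop w |>.mono fun w' hww' => ?_)
  calc cdfGap f K c w ≤ cdfGap f K c w' :=
        cdfGap_le_of_forall_Ioo_le hf heven hww' fun u _ => h u
    _ ≤ ∫ u in Iic (c - w'), f u :=
        sub_le_self _ (mul_nonneg hK (integral_nonneg fun u => hnonneg u))

theorem cdfGap_le_cdfGap_add_sub (hf : Integrable f) (hnonneg : ∀ x, 0 ≤ f x) (hK : 0 ≤ K)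
    {c' : ℝ} (hc' : c' ≤ c) (w : ℝ) : cdfGap f K c' w ≤ cdfGap f K c (w + (c - c')) := by
  unfold cdfGap
  rw [show c - (w + (c - c')) = c' - w by ring]
  refine sub_le_sub_left (mul_le_mul_of_nonneg_left ?_ hK) _
  exact setIntegral_mono_set hf.integrableOn (.of_forall hnonneg)
    (Iic_subset_Iic.mpr (by linarith)).eventuallyLE

end CdfGap

section Threshold

variable {a : EReal} {K c : ℝ}

theorem cdfGap_le_of_isLUB (hf : Integrable f) (hnonneg : ∀ x, 0 ≤ f x)
    (hlc : ∀ x y t : ℝ, t ∈ Icc (0:ℝ) 1 → f x ^ t * f y ^ (1 - t) ≤ f (t * x + (1 - t) * y))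
    (heven : ∀ x, f (-x) = f x)
    (hsupp : {x : ℝ | 0 < f x} = {x : ℝ | -a < (x : EReal) ∧ (x : EReal) < a})
    (hK : 0 ≤ K) (hc : 0 ≤ c) {τ : ℝ} (hτ : IsLUB (ratioBoundSet f a K c) τ) (w : ℝ) :
    cdfGap f K c w ≤ cdfGap f K c τ := by
  refine cdfGap_le_of_threshold hf heven (fun u hu => ?_)
    (fun u hu => le_of_notMem_ratioBoundSet hnonneg hsupp fun hmem => (hτ.1 hmem).not_gt hu) w
  obtain ⟨v, hv, huv⟩ := (lt_isLUB_iff hτ).mp hu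
  exact le_of_le_mem_ratioBoundSet hnonneg hlc hsupp hK hc hv huv.le

theorem cdfGap_nonpos_of_not_bddAbove (hf : Integrable f) (hnonneg : ∀ x, 0 ≤ f x)
    (hlc : ∀ x y t : ℝ, t ∈ Icc (0:ℝ) 1 → f x ^ t * f y ^ (1 - t) ≤ f (t * x + (1 - t) * y))
    (heven : ∀ x, f (-x) = f x)
    (hsupp : {x : ℝ | 0 < f x} = {x : ℝ | -a < (x : EReal) ∧ (x : EReal) < a})
    (hK : 0 ≤ K) (hc : 0 ≤ c) (hunb : ¬BddAbove (ratioBoundSet f a K c)) (w : ℝ) :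
    cdfGap f K c w ≤ 0 := by
  refine cdfGap_nonpos_of_forall hf heven hnonneg hK (fun u => ?_) w
  obtain ⟨v, hv, huv⟩ := not_bddAbove_iff.mp hunb u
  exact le_of_le_mem_ratioBoundSet hnonneg hlc hsupp hK hc hv huv.le

end Threshold

end

theorem criterion_monotone_in_scale_general (f : ℝ → ℝ)
    (hnonneg : ∀ x, 0 ≤ f x) (hint : ∫ x, f x = 1)
    (hlc : ∀ x y t : ℝ, t ∈ Set.Icc (0:ℝ) 1 →
      f x ^ t * f y ^ (1 - t) ≤ f (t * x + (1 - t) * y))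
    (heven : ∀ x, f (-x) = f x)
    (a : EReal) (ha : 0 < a)
    (hsupp : {x : ℝ | 0 < f x} = {x : ℝ | -a < (x : EReal) ∧ (x : EReal) < a})
    (Δ : ℝ) (hΔ : 0 < Δ) (ε δ : ℝ) (hε : 0 ≤ ε) (hδ : 0 ≤ δ)
    (s : ℝ) (hs : 0 < s)
    (hcrit : ∀ t : ℝ,
      IsLUB {z : ℝ | (z : EReal) < a * (s : EReal) ∧
          f ((z - Δ) / s) ≤ Real.exp ε * f (z / s)} t →
      (∫ u in Set.Iic ((Δ - t) / s), f u) -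
          Real.exp ε * (∫ u in Set.Iic (-t / s), f u) ≤ δ) :
    ∀ s' : ℝ, s < s' →
      ∀ t : ℝ,
        IsLUB {z : ℝ | (z : EReal) < a * (s' : EReal) ∧
            f ((z - Δ) / s') ≤ Real.exp ε * f (z / s')} t →
        (∫ u in Set.Iic ((Δ - t) / s'), f u) -
            Real.exp ε * (∫ u in Set.Iic (-t / s'), f u) ≤ δ := by
  intro s' hss' t' _
  have hf : Integrable f := by
    by_contra h
    simp [integral_undef h] at hint
  have hK : 0 ≤ Real.exp ε := (Real.exp_pos ε).le
  have hc : 0 ≤ Δ / s := by positivity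
  set T := ratioBoundSet f a (Real.exp ε) (Δ / s)
  set e := OrderIso.divRight₀ s hs
  have hscale : {z : ℝ | (z : EReal) < a * (s : EReal) ∧
      f ((z - Δ) / s) ≤ Real.exp ε * f (z / s)} = e ⁻¹' T := by
    ext z
    simp only [mem_ofPred_eq, mem_preimage, e, OrderIso.divRight₀_apply, T, ratioBoundSet,
      EReal.coe_div, EReal.div_lt_iff (EReal.coe_pos.mpr hs) (EReal.coe_ne_top s), sub_div]
  have hgap : ∀ w, cdfGap f (Real.exp ε) (Δ / s) w ≤ δ := by
    by_cases hbdd : BddAbove T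
    · have hτ : IsLUB T (sSup T) :=
        isLUB_csSup ⟨0, zero_mem_ratioBoundSet hnonneg hlc heven ha (Real.one_le_exp hε)⟩ hbdd
      have hcritτ := hcrit _ (hscale ▸ e.isLUB_preimage'.mpr hτ)
      have hτs : e.symm (sSup T) / s = sSup T := e.apply_symm_apply _
      rw [sub_div, neg_div, hτs] at hcritτ
      exact fun w => (cdfGap_le_of_isLUB hf hnonneg hlc heven hsupp hK hc hτ w).trans hcritτ
    · exact fun w => (cdfGap_nonpos_of_not_bddAbove hf hnonneg hlc heven hsupp hK hc hbdd w).trans hδ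
  calc _ = cdfGap f (Real.exp ε) (Δ / s') (t' / s') := by rw [sub_div, neg_div]; rfl
    _ ≤ cdfGap f (Real.exp ε) (Δ / s) (t' / s' + (Δ / s - Δ / s')) :=
      cdfGap_le_cdfGap_add_sub hf hnonneg hK (by gcongr) _
    _ ≤ δ := hgap _

/-- The privacy criterion `F((Δ−t)/s) − e^ε F(−t/s) ≤ δ` (with `t` the
appropriate supremum depending on the scale) is monotone in the scale:
if it holds at scale `s > 0` then it holds at every scale `s' > s`. -/
theorem criterion_monotone_in_scale (f : ℝ → ℝ) (hmeas : Measurable f)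
    (hnonneg : ∀ x, 0 ≤ f x) (hint : ∫ x, f x = 1)
    (hlc : ∀ x y t : ℝ, t ∈ Set.Icc (0:ℝ) 1 →
      f x ^ t * f y ^ (1 - t) ≤ f (t * x + (1 - t) * y))
    (heven : ∀ x, f (-x) = f x)
    (hlsc : LowerSemicontinuous f)
    (a : EReal) (ha : 0 < a)
    (hsupp : {x : ℝ | 0 < f x} = {x : ℝ | -a < (x : EReal) ∧ (x : EReal) < a})
    (Δ : ℝ) (hΔ : 0 < Δ) (ε δ : ℝ) (hε : 0 ≤ ε) (hδ : 0 ≤ δ)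
    (s : ℝ) (hs : 0 < s)
    (hcrit : ∀ t : ℝ,
      IsLUB {z : ℝ | (z : EReal) < a * (s : EReal) ∧
          f ((z - Δ) / s) ≤ Real.exp ε * f (z / s)} t →
      (∫ u in Set.Iic ((Δ - t) / s), f u) -
          Real.exp ε * (∫ u in Set.Iic (-t / s), f u) ≤ δ) :
    ∀ s' : ℝ, s < s' →
      ∀ t : ℝ,
        IsLUB {z : ℝ | (z : EReal) < a * (s' : EReal) ∧
            f ((z - Δ) / s') ≤ Real.exp ε * f (z / s')} t →
        (∫ u in Set.Iic ((Δ - t) / s'), f u) -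
            Real.exp ε * (∫ u in Set.Iic (-t / s'), f u) ≤ δ :=
  criterion_monotone_in_scale_general f hnonneg hint hlc heven a ha hsupp Δ hΔ ε δ hε hδ s hs hcrit
end

section
/- Key reduction for the multidimensional case: let f be a log-concave even one-dimensional density, nonincreasing on [0, ∞), ‖·‖ a norm on ℝⁿ, d > 0, ε ≥ 0. Then for x ∈ ℝⁿ: f(‖x − v‖) ≤ e^ε f(‖x‖) holds for all v with ‖v‖ = d if and only if f(‖x‖ − d) ≤ e^ε f(‖x‖). -/
/-!
Since `f` is even and nonincreasing on `[0, ∞)`, `f y` only grows as `|y|` shrinks. By the reverse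
triangle inequality `|‖x‖ - d| ≤ ‖x - v‖` whenever `‖v‖ = d`, so `f (‖x‖ - d)` bounds every
`f ‖x - v‖`. Conversely, when `‖x‖ ≤ |‖x‖ - d|` the inequality is immediate, and otherwise
`x ≠ 0` and `d > 0`, so the bound is attained at `v = (d / ‖x‖) • x`.
-/

open Real

lemma exists_norm_eq_and_norm_sub_eq_abs {E : Type*} [NormedAddCommGroup E] [NormedSpace ℝ E]
    {x : E} (hx : x ≠ 0) {d : ℝ} (hd : 0 ≤ d) :
    ∃ v : E, ‖v‖ = d ∧ ‖x - v‖ = |‖x‖ - d| := by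
  have hxpos : 0 < ‖x‖ := norm_pos_iff.2 hx
  refine ⟨(d / ‖x‖) • x, ?_, ?_⟩
  · rw [norm_smul, norm_div, norm_norm, Real.norm_of_nonneg hd, div_mul_cancel₀ _ hxpos.ne']
  · rw [show x - (d / ‖x‖) • x = (1 - d / ‖x‖) • x by rw [sub_smul, one_smul], norm_smul,
      Real.norm_eq_abs, ← abs_norm x, ← abs_mul, abs_norm, sub_mul, one_mul,
      div_mul_cancel₀ _ hxpos.ne']

section EvenAntitone

variable {f : ℝ → ℝ} (heven : ∀ y, f (-y) = f y) (hanti : AntitoneOn f (Set.Ici 0))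
include heven

lemma apply_abs_of_even (y : ℝ) : f |y| = f y := by
  rcases abs_choice y with h | h <;> simp only [h, heven]

include hanti

lemma apply_le_apply_of_abs_le {y z : ℝ} (h : |y| ≤ |z|) : f z ≤ f y := by
  rw [← apply_abs_of_even heven y, ← apply_abs_of_even heven z]
  exact hanti (abs_nonneg y) (abs_nonneg z) h

end EvenAntitone

theorem sphere_reduction_general {E : Type*} [NormedAddCommGroup E] [NormedSpace ℝ E]
    (f : ℝ → ℝ) (hpos : ∀ x, 0 ≤ f x) (heven : ∀ x, f (-x) = f x)
    (hanti : AntitoneOn f (Set.Ici 0))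
    (d ε : ℝ) (hε : 0 ≤ ε) (x : E) :
    (∀ v : E, ‖v‖ = d → f ‖x - v‖ ≤ Real.exp ε * f ‖x‖) ↔
      f (‖x‖ - d) ≤ Real.exp ε * f ‖x‖ := by
  constructor
  · intro h
    by_cases htrivial : ‖x‖ ≤ |‖x‖ - d|
    · calc f (‖x‖ - d) ≤ f ‖x‖ :=
            apply_le_apply_of_abs_le heven hanti (by rwa [abs_norm])
        _ ≤ exp ε * f ‖x‖ := le_mul_of_one_le_left (hpos _) (one_le_exp hε)
    · have hx : x ≠ 0 := by
        rintro rfl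
        exact htrivial (by simp)
      have hd : 0 ≤ d := by
        by_contra! hd
        exact htrivial (by linarith [le_abs_self (‖x‖ - d)])
      obtain ⟨v, hv, hxv⟩ := exists_norm_eq_and_norm_sub_eq_abs hx hd
      rw [← apply_abs_of_even heven, ← hxv]
      exact h v hv
  · intro h v hv
    calc f ‖x - v‖ ≤ f (‖x‖ - d) :=
          apply_le_apply_of_abs_le heven hanti
            (by rw [abs_norm, ← hv]; exact abs_norm_sub_norm_le x v)
      _ ≤ exp ε * f ‖x‖ := h

/-- Key reduction for the multidimensional case: for a log-concave even
density `f`, nonincreasing on `[0, ∞)`, a norm `‖·‖`, `d > 0` and `ε ≥ 0`: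
`f(‖x − v‖) ≤ e^ε f(‖x‖)` holds for every `v` with `‖v‖ = d` iff
`f(‖x‖ − d) ≤ e^ε f(‖x‖)`. -/
theorem sphere_reduction {E : Type*} [NormedAddCommGroup E] [NormedSpace ℝ E]
    (f : ℝ → ℝ) (hpos : ∀ x, 0 ≤ f x) (heven : ∀ x, f (-x) = f x)
    (hlc : ∀ x y t : ℝ, t ∈ Set.Icc (0:ℝ) 1 →
      f x ^ t * f y ^ (1 - t) ≤ f (t * x + (1 - t) * y))
    (hanti : AntitoneOn f (Set.Ici 0))
    (hint : ∫ x, f x = 1)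
    (d ε : ℝ) (hd : 0 < d) (hε : 0 ≤ ε) (x : E) :
    (∀ v : E, ‖v‖ = d → f ‖x - v‖ ≤ Real.exp ε * f ‖x‖) ↔
      f (‖x‖ - d) ≤ Real.exp ε * f ‖x‖ :=
  sphere_reduction_general f hpos heven hanti d ε hε x
end
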